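/- The free commutative semigroup on two generators, S = ⟨ a, b | ab = ba ⟩, is not word hyperbolic. -/

import Mathlib

/-- Evaluation of a nonempty word in a semigroup via a map on letters;
the empty word evaluates to `none`. -/
def evalS {α S : Type*} [Semigroup S] (f : α → S) : List α → Option S
  | [] => none
  | a :: as => some (as.foldl (fun s b => s * f b) (f a))

/-- `f : α → S` determines a choice of generators `α⁺ → S`, i.e. the induced
semigroup homomorphism from the free semigroup on `α` is surjective. -/
def IsChoice {α S : Type*} [Semigroup S] (f : α → S) : Prop :=
  ∀ s : S, ∃ w : List α, evalS f w = some s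

/-- The encoding of `u#v#wʳ` as a word over `Option α`, with `none` playing the
role of the fresh symbol `#`. -/
def hashWord {α : Type*} (u v w : List α) : List (Option α) :=
  u.map some ++ none :: v.map some ++ none :: w.reverse.map some

/-- The multiplication table of the language `R` with respect to `f`:
all words `u#v#wʳ` with `u,v,w ∈ R` and `ū·v̄ = w̄`. -/
def mulTable {α S : Type*} [Semigroup S] (f : α → S) (R : Language α) :
    Language (Option α) :=
  { x | ∃ u v w, u ∈ R ∧ v ∈ R ∧ w ∈ R ∧
      (∃ su sv, evalS f u = some su ∧ evalS f v = some sv ∧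
        evalS f w = some (su * sv)) ∧ x = hashWord u v w }

/-- `R` is a combing for `S` with respect to `f`: a set of nonempty words
representing every element of `S`. -/
def IsCombing {α S : Type*} [Semigroup S] (f : α → S) (R : Language α) : Prop :=
  ([] : List α) ∉ R ∧ ∀ s : S, ∃ w ∈ R, evalS f w = some s

/-- A semigroup is word hyperbolic if for some choice of generators there is a
regular combing whose multiplication table is context-free. -/
def WordHyperbolic (S : Type*) [Semigroup S] : Prop :=
  ∃ (α : Type) (_ : Fintype α) (f : α → S), IsChoice f ∧
    ∃ R : Language α, R.IsRegular ∧ IsCombing f R ∧ (mulTable f R).IsContextFree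

/-- The free commutative semigroup on two generators `⟨a, b ∣ ab = ba⟩`,
realized as `(ℕ × ℕ) \ {(0,0)}` under addition (written multiplicatively). -/
def FreeComm2 : Type := { p : ℕ × ℕ // p ≠ 0 }

instance : Semigroup FreeComm2 where
  mul x y := ⟨x.val + y.val, fun h => x.property (by
    have h1 : x.val.1 + y.val.1 = 0 := congrArg Prod.fst h
    have h2 : x.val.2 + y.val.2 = 0 := congrArg Prod.snd h
    exact Prod.ext (Nat.eq_zero_of_add_eq_zero_right h1)
      (Nat.eq_zero_of_add_eq_zero_right h2))⟩
  mul_assoc x y z := Subtype.ext (add_assoc x.val y.val z.val)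


namespace CFPump

variable {T : Type}

mutual
  inductive PT (g : ContextFreeGrammar.{0} T) : g.NT → List T → Type where
    | node (r : ContextFreeRule T g.NT) (hr : r ∈ g.rules) {w : List T}
        (c : PF g r.output w) : PT g r.input w
  inductive PF (g : ContextFreeGrammar.{0} T) : List (Symbol T g.NT) → List T → Type where
    | nil : PF g [] []
    | term (t : T) {l : List (Symbol T g.NT)} {w : List T} (c : PF g l w) :
        PF g (Symbol.terminal t :: l) (t :: w)
    | nt {n : g.NT} {u : List T} {l : List (Symbol T g.NT)} {w : List T}
        (s : PT g n u) (c : PF g l w) : PF g (Symbol.nonterminal n :: l) (u ++ w)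
end

variable {g : ContextFreeGrammar.{0} T}

mutual
  def PT.size : ∀ {n w}, PT g n w → ℕ
    | _, _, .node _ _ c => c.sizeF + 1
  def PF.sizeF : ∀ {l w}, PF g l w → ℕ
    | _, _, .nil => 0
    | _, _, .term _ c => c.sizeF
    | _, _, .nt s c => s.size + c.sizeF
end

mutual
  def PT.ht : ∀ {n w}, PT g n w → ℕ
    | _, _, .node _ _ c => c.htF + 1
  def PF.htF : ∀ {l w}, PF g l w → ℕ
    | _, _, .nil => 0
    | _, _, .term _ c => c.htF
    | _, _, .nt s c => max s.ht c.htF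
end

@[simp] lemma PT.size_node {r : ContextFreeRule T g.NT} {hr : r ∈ g.rules} {w : List T}
    (c : PF g r.output w) : (PT.node r hr c).size = c.sizeF + 1 := by rw [PT.size]

@[simp] lemma PT.ht_node {r : ContextFreeRule T g.NT} {hr : r ∈ g.rules} {w : List T}
    (c : PF g r.output w) : (PT.node r hr c).ht = c.htF + 1 := by rw [PT.ht]

lemma PT.one_le_ht : ∀ {n w} (t : PT g n w), 1 ≤ t.ht
  | _, _, .node _ _ c => by simp

def PT.cast {n : g.NT} {w w' : List T} (h : w = w') (t : PT g n w) : PT g n w' := h ▸ t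

@[simp] lemma PT.size_cast {n : g.NT} {w w' : List T} (h : w = w') (t : PT g n w) :
    (t.cast h).size = t.size := by subst h; rfl

def PT.castNT {n n' : g.NT} {w : List T} (h : n = n') (t : PT g n w) : PT g n' w := h ▸ t

@[simp] lemma PT.size_castNT {n n' : g.NT} {w : List T} (h : n = n') (t : PT g n w) :
    (t.castNT h).size = t.size := by subst h; rfl

def PF.cast {l : List (Symbol T g.NT)} {w w' : List T} (h : w = w') (c : PF g l w) :
    PF g l w' := h ▸ c

@[simp] lemma PF.sizeF_cast {l : List (Symbol T g.NT)} {w w' : List T} (h : w = w')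
    (c : PF g l w) : (c.cast h).sizeF = c.sizeF := by subst h; rfl

mutual
  theorem PT.deriv : ∀ {n w} (t : PT g n w),
      g.Derives [Symbol.nonterminal n] (w.map Symbol.terminal)
    | _, _, .node r hr c =>
        (ContextFreeGrammar.Produces.single
          ⟨r, hr, ContextFreeRule.Rewrites.input_output⟩).trans c.derivF
  theorem PF.derivF : ∀ {l w} (c : PF g l w), g.Derives l (w.map Symbol.terminal)
    | _, _, .nil => ContextFreeGrammar.Derives.refl []
    | _, _, .term t c => by
        simpa using c.derivF.append_left [Symbol.terminal t]
    | _, _, @PF.nt _ _ n u l w s c => by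
        have h1 : g.Derives ([Symbol.nonterminal n] ++ l) (u.map Symbol.terminal ++ l) :=
          s.deriv.append_right l
        have h2 : g.Derives (u.map Symbol.terminal ++ l)
            (u.map Symbol.terminal ++ w.map Symbol.terminal) :=
          c.derivF.append_left (u.map Symbol.terminal)
        have := h1.trans h2
        simpa using this
end

/-- A bound on the branching of `g`. -/
def Bnd (g : ContextFreeGrammar.{0} T) : ℕ := (g.rules.sup fun r => r.output.length) + 2

lemma two_le_Bnd : 2 ≤ Bnd g := Nat.le_add_left 2 _

lemma one_le_Bnd_pow (k : ℕ) : 1 ≤ (Bnd g) ^ k :=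
  Nat.one_le_pow _ _ (by have := two_le_Bnd (g := g); omega)

mutual
  theorem PT.yield_le : ∀ {n w} (t : PT g n w), w.length ≤ (Bnd g) ^ t.ht
    | _, _, .node r hr c => by
        have h1 := c.yield_leF
        have h2 : r.output.length ≤ Bnd g :=
          le_trans (Finset.le_sup (f := fun r : ContextFreeRule T g.NT => r.output.length) hr)
            (Nat.le_add_right _ 2)
        have h3 : r.output.length * (Bnd g) ^ c.htF ≤ Bnd g * (Bnd g) ^ c.htF :=
          Nat.mul_le_mul_right _ h2
        have h4 : Bnd g * (Bnd g) ^ c.htF = (Bnd g) ^ (c.htF + 1) := (pow_succ' _ _).symm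
        rw [PT.ht_node]
        omega
  theorem PF.yield_leF : ∀ {l w} (c : PF g l w), w.length ≤ l.length * (Bnd g) ^ c.htF
    | _, _, .nil => by simp
    | _, _, @PF.term _ _ t l w c => by
        have h1 := c.yield_leF
        have hp : 1 ≤ (Bnd g) ^ c.htF := one_le_Bnd_pow _
        have he : (PF.term t c).htF = c.htF := by rw [PF.htF]
        rw [he]
        have : (l.length + 1) * Bnd g ^ c.htF
            = l.length * Bnd g ^ c.htF + Bnd g ^ c.htF := by ring
        simp only [List.length_cons]
        omega
    | _, _, @PF.nt _ _ n u l w s c => by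
        have h1 := c.yield_leF
        have h2 := s.yield_le
        have hB : 1 ≤ Bnd g := by have := two_le_Bnd (g := g); omega
        have he : (PF.nt s c).htF = max s.ht c.htF := by rw [PF.htF]
        have hs : (Bnd g) ^ s.ht ≤ (Bnd g) ^ (max s.ht c.htF) :=
          Nat.pow_le_pow_right hB (le_max_left _ _)
        have hc : (Bnd g) ^ c.htF ≤ (Bnd g) ^ (max s.ht c.htF) :=
          Nat.pow_le_pow_right hB (le_max_right _ _)
        have hc' : l.length * (Bnd g) ^ c.htF ≤ l.length * (Bnd g) ^ (max s.ht c.htF) :=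
          Nat.mul_le_mul_left _ hc
        have hlen : (u ++ w).length = u.length + w.length := List.length_append
        have hfin : (Symbol.nonterminal n :: l).length * (Bnd g) ^ (max s.ht c.htF)
            = (Bnd g) ^ (max s.ht c.htF) + l.length * (Bnd g) ^ (max s.ht c.htF) := by
          rw [List.length_cons]; ring
        rw [he]
        omega
end

def PF.ofTerms : ∀ (w : List T), PF g (w.map Symbol.terminal) w
  | [] => PF.nil
  | t :: w => PF.term t (PF.ofTerms w)

def PF.append : ∀ {l₁ l₂ : List (Symbol T g.NT)} {w₁ w₂ : List T},
    PF g l₁ w₁ → PF g l₂ w₂ → PF g (l₁ ++ l₂) (w₁ ++ w₂)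
  | _, _, _, _, .nil, c₂ => c₂
  | _, _, _, _, .term t c, c₂ => PF.term t (c.append c₂)
  | _, _, _, _, @PF.nt _ _ n u l w s c, c₂ =>
      (PF.nt s (c.append c₂)).cast (List.append_assoc u w _).symm

theorem PF.split : ∀ {l₁ l₂ : List (Symbol T g.NT)} {w : List T}, PF g (l₁ ++ l₂) w →
    ∃ w₁ w₂, w = w₁ ++ w₂ ∧ Nonempty (PF g l₁ w₁) ∧ Nonempty (PF g l₂ w₂) := by
  intro l₁
  induction l₁ with
  | nil => exact fun c => ⟨[], _, rfl, ⟨PF.nil⟩, ⟨c⟩⟩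
  | cons x l₁ ih =>
    intro l₂ w c
    cases c with
    | term t c =>
      obtain ⟨w₁, w₂, rfl, ⟨c₁⟩, ⟨c₂⟩⟩ := ih c
      exact ⟨t :: w₁, w₂, rfl, ⟨PF.term t c₁⟩, ⟨c₂⟩⟩
    | nt s c =>
      obtain ⟨w₁, w₂, rfl, ⟨c₁⟩, ⟨c₂⟩⟩ := ih c
      exact ⟨_ ++ w₁, w₂, by rw [List.append_assoc], ⟨PF.nt s c₁⟩, ⟨c₂⟩⟩

theorem PF.ofDerives : ∀ {s : List (Symbol T g.NT)} {w : List T},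
    g.Derives s (w.map Symbol.terminal) → Nonempty (PF g s w) := by
  intro s w h
  induction h using Relation.ReflTransGen.head_induction_on with
  | refl => exact ⟨PF.ofTerms w⟩
  | head hp _ ih =>
    obtain ⟨r, hr, hrw⟩ := hp
    obtain ⟨p, q, rfl, rfl⟩ := hrw.exists_parts
    obtain ⟨c⟩ := ih
    have c'' : PF g (p ++ (r.output ++ q)) w := by
      have : p ++ r.output ++ q = p ++ (r.output ++ q) := List.append_assoc _ _ _
      exact this ▸ c
    obtain ⟨w₁, w₂, rfl, ⟨c₁⟩, ⟨c₂'⟩⟩ := PF.split c''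
    obtain ⟨w₃, w₄, rfl, ⟨c₃⟩, ⟨c₄⟩⟩ := PF.split c₂'
    refine ⟨?_⟩
    have tr : PT g r.input w₃ := PT.node r hr c₃
    have fz : PF g (Symbol.nonterminal r.input :: q) (w₃ ++ w₄) := PF.nt tr c₄
    have := c₁.append fz
    have heq : p ++ Symbol.nonterminal r.input :: q
        = p ++ [Symbol.nonterminal r.input] ++ q := by simp
    exact heq ▸ this

theorem PT.ofDerives {n : g.NT} {w : List T}
    (h : g.Derives [Symbol.nonterminal n] (w.map Symbol.terminal)) :
    Nonempty (PT g n w) := by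
  obtain ⟨c⟩ := PF.ofDerives h
  cases c with
  | nt s c =>
    cases c with
    | nil => exact ⟨s.cast (by simp)⟩

@[simp] lemma PF.htF_nil : (PF.nil : PF g [] []).htF = 0 := by rw [PF.htF]
@[simp] lemma PF.htF_term {t : T} {l : List (Symbol T g.NT)} {w : List T} (c : PF g l w) :
    (PF.term t c).htF = c.htF := by rw [PF.htF]
@[simp] lemma PF.htF_nt {n : g.NT} {u : List T} {l : List (Symbol T g.NT)} {w : List T}
    (s : PT g n u) (c : PF g l w) : (PF.nt s c).htF = max s.ht c.htF := by rw [PF.htF]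
@[simp] lemma PF.sizeF_nil : (PF.nil : PF g [] []).sizeF = 0 := by rw [PF.sizeF]
@[simp] lemma PF.sizeF_term {t : T} {l : List (Symbol T g.NT)} {w : List T} (c : PF g l w) :
    (PF.term t c).sizeF = c.sizeF := by rw [PF.sizeF]
@[simp] lemma PF.sizeF_nt {n : g.NT} {u : List T} {l : List (Symbol T g.NT)} {w : List T}
    (s : PT g n u) (c : PF g l w) : (PF.nt s c).sizeF = s.size + c.sizeF := by rw [PF.sizeF]

/-- A one-hole context with root `A`, hole `A'`. -/
structure Ctx (g : ContextFreeGrammar.{0} T) (A : g.NT) (pre post : List T) (A' : g.NT) where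
  extra : ℕ
  fill : ∀ {u : List T}, PT g A' u → PT g A (pre ++ u ++ post)
  size_fill : ∀ {u : List T} (s : PT g A' u), (fill s).size = extra + s.size
  deriv : g.Derives [Symbol.nonterminal A]
    (pre.map Symbol.terminal ++ Symbol.nonterminal A' :: post.map Symbol.terminal)

def Ctx.id (A : g.NT) : Ctx g A [] [] A where
  extra := 0
  fill s := s.cast (by simp)
  size_fill s := by simp
  deriv := by simpa using ContextFreeGrammar.Derives.refl [Symbol.nonterminal A]

def Ctx.comp {A A1 A2 : g.NT} {p1 q1 p2 q2 : List T}
    (C1 : Ctx g A p1 q1 A1) (C2 : Ctx g A1 p2 q2 A2) : Ctx g A (p1 ++ p2) (q2 ++ q1) A2 where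
  extra := C1.extra + C2.extra
  fill s := (C1.fill (C2.fill s)).cast (by simp)
  size_fill s := by rw [PT.size_cast, C1.size_fill, C2.size_fill]; omega
  deriv := by
    have h2 := ((C2.deriv).append_left (p1.map Symbol.terminal)).append_right
      (q1.map Symbol.terminal)
    have h1 : g.Derives [Symbol.nonterminal A]
        ((p1.map Symbol.terminal ++ [Symbol.nonterminal A1]) ++ q1.map Symbol.terminal) := by
      simpa using C1.deriv
    have h3 := h1.trans (by simpa using h2)
    simpa [List.append_assoc] using h3

theorem PF.stepF : ∀ {l : List (Symbol T g.NT)} {w : List T} (c : PF g l w), 1 ≤ c.htF →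
    ∃ (A : g.NT) (pre post x : List T) (s : PT g A x) (e : ℕ),
      w = pre ++ x ++ post ∧ s.ht = c.htF ∧ e + s.size = c.sizeF ∧
      g.Derives l
        (pre.map Symbol.terminal ++ Symbol.nonterminal A :: post.map Symbol.terminal) ∧
      ∃ F : (∀ u' : List T, PT g A u' → PF g l (pre ++ u' ++ post)),
        ∀ (u' : List T) (s' : PT g A u'), (F u' s').sizeF = e + s'.size
  | _, _, .nil => by intro h; simp at h
  | _, _, @PF.term _ _ t l w c => by
    intro h
    simp only [PF.htF_term] at h
    obtain ⟨A, pre, post, x, s, e, hw, hht, hsz, hd, F, hF⟩ := PF.stepF c h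
    refine ⟨A, t :: pre, post, x, s, e, by simp [hw], by simpa using hht, by simpa using hsz,
      ?_, fun u' s' => (PF.term t (F u' s')).cast (by simp), ?_⟩
    · simpa using hd.append_left [Symbol.terminal t]
    · intro u' s'; simp [hF]
  | _, _, @PF.nt _ _ n u l w s c => by
    intro h
    rcases le_or_gt c.htF s.ht with hle | hlt
    · refine ⟨n, [], w, u, s, c.sizeF, by simp, ?_, by simp [Nat.add_comm], ?_,
        fun u' s' => (PF.nt s' c).cast (by simp), ?_⟩
      · simp [max_eq_left hle]
      · simpa using c.derivF.append_left [Symbol.nonterminal n]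
      · intro u' s'; simp [Nat.add_comm]
    · have h1 : 1 ≤ c.htF := le_trans s.one_le_ht (le_of_lt hlt)
      obtain ⟨A, pre, post, x, s₂, e, hw, hht, hsz, hd, F, hF⟩ := PF.stepF c h1
      refine ⟨A, u ++ pre, post, x, s₂, s.size + e, by simp [hw], ?_, by simp; omega, ?_,
        fun u' s' => (PF.nt s (F u' s')).cast (by simp), ?_⟩
      · simp [hht, max_eq_right (le_of_lt hlt)]
      · have hstep := s.deriv.append_right l
        have h2 := hd.append_left (u.map Symbol.terminal)
        have h3 : g.Derives (Symbol.nonterminal n :: l) (u.map Symbol.terminal ++ l) := by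
          simpa using hstep
        have h4 := h3.trans h2
        simpa [List.append_assoc] using h4
      · intro u' s'; simp [hF]; omega

theorem PT.step : ∀ {n : g.NT} {w : List T} (t : PT g n w), 2 ≤ t.ht →
    ∃ (A : g.NT) (pre post x : List T) (s : PT g A x) (e : ℕ),
      w = pre ++ x ++ post ∧ s.ht + 1 = t.ht ∧ 1 ≤ e ∧ e + s.size = t.size ∧
      g.Derives [Symbol.nonterminal n]
        (pre.map Symbol.terminal ++ Symbol.nonterminal A :: post.map Symbol.terminal) ∧
      ∃ F : (∀ u' : List T, PT g A u' → PT g n (pre ++ u' ++ post)),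
        ∀ (u' : List T) (s' : PT g A u'), (F u' s').size = e + s'.size
  | _, _, .node r hr c => by
    intro h
    simp only [PT.ht_node] at h
    obtain ⟨A, pre, post, x, s, e, hw, hht, hsz, hd, F, hF⟩ := PF.stepF c (by omega)
    refine ⟨A, pre, post, x, s, e + 1, hw, by simp [hht], by omega, by simp; omega, ?_,
      fun u' s' => PT.node r hr (F u' s'), ?_⟩
    · exact (ContextFreeGrammar.Produces.single
        ⟨r, hr, ContextFreeRule.Rewrites.input_output⟩).trans hd
    · intro u' s'; simp [hF]; omega

noncomputable def Inputs (g : ContextFreeGrammar.{0} T) : Finset g.NT :=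
  @Finset.image _ _ (Classical.decEq _) (·.input) g.rules

lemma PT.root_mem : ∀ {n : g.NT} {w : List T}, PT g n w → n ∈ Inputs g
  | _, _, .node r hr _ => by
      unfold Inputs; exact @Finset.mem_image_of_mem _ _ (Classical.decEq _) _ _ _ hr

variable {n₀ : g.NT} {w : List T} {total : ℕ}

structure Rec (g : ContextFreeGrammar.{0} T) (n₀ : g.NT) (w : List T) (total : ℕ) where
  A : g.NT
  pre : List T
  post : List T
  u : List T
  s : PT g A u
  C : Ctx g n₀ pre post A
  hw : pre ++ u ++ post = w
  hsz : C.extra + s.size = total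

def Rel (r1 r2 : Rec g n₀ w total) : Prop :=
  ∃ (pre' post' : List T) (_ : Ctx g r1.A pre' post' r2.A),
    r2.pre = r1.pre ++ pre' ∧ r2.post = post' ++ r1.post ∧
    r1.u = pre' ++ r2.u ++ post' ∧ r2.s.size < r1.s.size

lemma Rel.trans : Transitive (Rel (g := g) (n₀ := n₀) (w := w) (total := total)) := by
  rintro r1 r2 r3 ⟨p1, q1, C1, h1, h2, h3, h4⟩ ⟨p2, q2, C2, h5, h6, h7, h8⟩
  exact ⟨p1 ++ p2, q2 ++ q1, C1.comp C2, by simp [h5, h1], by simp [h6, h2],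
    by simp [h3, h7], lt_trans h8 h4⟩

theorem chain : ∀ (d : ℕ) {A : g.NT} {u : List T} (s : PT g A u) (pre post : List T)
    (C : Ctx g n₀ pre post A) (hw : pre ++ u ++ post = w) (hsz : C.extra + s.size = total),
    d + 1 ≤ s.ht →
    ∃ recs : List (Rec g n₀ w total), recs.length = d + 1 ∧ List.Chain' Rel recs ∧
      recs.head? = some ⟨A, pre, post, u, s, C, hw, hsz⟩ := by
  intro d
  induction d with
  | zero => exact fun s pre post C hw hsz _ => ⟨[⟨_, pre, post, _, s, C, hw, hsz⟩], rfl,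
      List.isChain_singleton _, rfl⟩
  | succ d ih =>
    intro A u s pre post C hw hsz hht
    obtain ⟨A₂, pre₂, post₂, x, s₂, e, hxw, hht₂, he1, hesz, hd, F, hF⟩ := s.step (by omega)
    set C₂ : Ctx g A pre₂ post₂ A₂ :=
      ⟨e, fun {u'} s' => F u' s', fun s' => hF _ s', hd⟩ with hC₂
    have hw₂ : (pre ++ pre₂) ++ x ++ (post₂ ++ post) = w := by
      rw [← hw, hxw]; simp [List.append_assoc]
    have hsz₂ : (C.comp C₂).extra + s₂.size = total := by
      have : (C.comp C₂).extra = C.extra + e := rfl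
      omega
    obtain ⟨recs, hlen, hch, hhd⟩ := ih s₂ (pre ++ pre₂) (post₂ ++ post) (C.comp C₂)
      hw₂ hsz₂ (by omega)
    obtain ⟨tl, rfl⟩ : ∃ tl, recs = (⟨A₂, pre ++ pre₂, post₂ ++ post, x, s₂, C.comp C₂,
        hw₂, hsz₂⟩ : Rec g n₀ w total) :: tl := by
      cases recs with
      | nil => simp at hhd
      | cons a tl => exact ⟨tl, by simpa using (by simpa using hhd : a = _) ▸ rfl⟩
    refine ⟨⟨A, pre, post, u, s, C, hw, hsz⟩ :: _, by simpa using hlen,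
      List.isChain_cons_cons.mpr ⟨?_, hch⟩, rfl⟩
    exact ⟨pre₂, post₂, C₂, rfl, rfl, hxw, (by omega : s₂.size < s.size)⟩

lemma rel_of_chain' {β : Type*} {Q : β → β → Prop} (htr : Transitive Q) :
    ∀ {l : List β}, List.Chain' Q l → ∀ (i j : ℕ) (hij : i < j) (hj : j < l.length),
      Q (l.get ⟨i, lt_trans hij hj⟩) (l.get ⟨j, hj⟩) := by
  intro l hch i j hij hj
  induction j with
  | zero => omega
  | succ j ihj =>
    have hstep : Q (l.get ⟨j, by omega⟩) (l.get ⟨j + 1, hj⟩) := by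
      have := List.isChain_iff_getElem.mp hch j (by omega)
      exact this
    rcases Nat.lt_or_ge i j with h | h
    · exact htr (ihj h (by omega)) hstep
    · have : i = j := by omega
      subst this; exact hstep


lemma subst_mid {l1 l2 : List T} {Y : g.NT} {out : List (Symbol T g.NT)}
    (h : g.Derives [Symbol.nonterminal Y] out) :
    g.Derives (l1.map Symbol.terminal ++ Symbol.nonterminal Y :: l2.map Symbol.terminal)
      (l1.map Symbol.terminal ++ out ++ l2.map Symbol.terminal) := by
  have := (h.append_left (l1.map Symbol.terminal)).append_right (l2.map Symbol.terminal)
  simpa [List.append_assoc] using this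

theorem dig : ∀ (fuel : ℕ) {A : g.NT} {u : List T} (s : PT g A u) (pre post : List T)
    (C : Ctx g n₀ pre post A) (hw : pre ++ u ++ post = w) (hsz : C.extra + s.size = total)
    (m : ℕ), s.ht = m + 1 + fuel →
    ∃ (A' : g.NT) (pre' post' u' : List T) (s' : PT g A' u') (C' : Ctx g n₀ pre' post' A'),
      pre' ++ u' ++ post' = w ∧ C'.extra + s'.size = total ∧ s'.ht = m + 1 := by
  intro fuel
  induction fuel with
  | zero => exact fun s pre post C hw hsz m hm => ⟨_, pre, post, _, s, C, hw, hsz, hm⟩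
  | succ fuel ih =>
    intro A u s pre post C hw hsz m hm
    obtain ⟨A₂, pre₂, post₂, x, s₂, e, hxw, hht₂, he1, hesz, hd, F, hF⟩ := s.step (by omega)
    set C₂ : Ctx g A pre₂ post₂ A₂ :=
      ⟨e, fun {u'} s' => F u' s', fun s' => hF _ s', hd⟩ with hC₂
    have hw₂ : (pre ++ pre₂) ++ x ++ (post₂ ++ post) = w := by
      rw [← hw, hxw]; simp [List.append_assoc]
    have hsz₂ : (C.comp C₂).extra + s₂.size = total := by
      have : (C.comp C₂).extra = C.extra + e := rfl
      omega
    exact ih s₂ (pre ++ pre₂) (post₂ ++ post) (C.comp C₂) hw₂ hsz₂ m (by omega)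

/-- The pumping lemma (weak form, with locality). -/
theorem pumping (g : ContextFreeGrammar.{0} T) :
    ∃ N, 0 < N ∧ ∀ w ∈ g.language, N ≤ w.length →
    ∃ p1 p2 p3 p4 p5 : List T, w = p1 ++ p2 ++ p3 ++ p4 ++ p5 ∧ p2 ++ p4 ≠ [] ∧
      (p2 ++ p3 ++ p4).length ≤ N ∧ p1 ++ p3 ++ p5 ∈ g.language ∧
      p1 ++ p2 ++ p2 ++ p3 ++ p4 ++ p4 ++ p5 ∈ g.language := by
  classical
  set K := (Inputs g).card with hK
  refine ⟨Bnd g ^ (K + 2), Nat.pow_pos (by have := two_le_Bnd (g := g); omega), ?_⟩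
  intro w hw hlen
  set N := Bnd g ^ (K + 2) with hN
  have hne : ∃ nn : ℕ, ∃ t : PT g g.initial w, t.size = nn := by
    obtain ⟨t⟩ := PT.ofDerives (g := g) hw
    exact ⟨t.size, t, rfl⟩
  obtain ⟨t₀, ht₀sz⟩ := Nat.find_spec hne
  have hmin : ∀ m < Nat.find hne, ¬ ∃ t : PT g g.initial w, t.size = m := fun m hm =>
    Nat.find_min hne hm
  have hht : K + 2 ≤ t₀.ht := by
    by_contra hcon
    have h1 : w.length ≤ Bnd g ^ t₀.ht := t₀.yield_le
    have h2 : Bnd g ^ t₀.ht ≤ Bnd g ^ (K + 1) :=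
      Nat.pow_le_pow_right (by have := two_le_Bnd (g := g); omega) (by omega)
    have h3 : Bnd g ^ (K + 1) < Bnd g ^ (K + 2) :=
      Nat.pow_lt_pow_right (by have := two_le_Bnd (g := g); omega) (by omega)
    omega
  have hid : ([] : List T) ++ w ++ ([] : List T) = w := by simp
  have hidsz : (Ctx.id g.initial).extra + t₀.size = Nat.find hne := by
    have : (Ctx.id g.initial).extra = 0 := rfl
    omega
  obtain ⟨A', pre', post', u', τ, C', hw', hsz', hht'⟩ := dig (n₀ := g.initial)
    (w := w) (total := Nat.find hne) (t₀.ht - (K + 2)) t₀ [] [] (Ctx.id g.initial) hid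
    hidsz (K + 1) (by omega)
  obtain ⟨recs0, hrlen, hch, hhd⟩ := chain (K + 1) τ pre' post' C' hw' hsz' (by omega)
  obtain ⟨tl, hrecs⟩ : ∃ tl, recs0 = (⟨A', pre', post', u', τ, C', hw', hsz'⟩ :
      Rec g g.initial w (Nat.find hne)) :: tl := by
    cases recs0 with
    | nil => simp at hhd
    | cons a tl => exact ⟨tl, by simpa using (by simpa using hhd : a = _) ▸ rfl⟩
  set r0 : Rec g g.initial w (Nat.find hne) := ⟨A', pre', post', u', τ, C', hw', hsz'⟩
    with hr0
  set recs := r0 :: tl with hrecsdef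
  clear hhd
  subst hrecs
  have hmem : ∀ i (hi : i < recs.length), (recs.get ⟨i, hi⟩).A ∈ Inputs g :=
    fun i hi => (recs.get ⟨i, hi⟩).s.root_mem
  have hdup : ∃ i, ∃ j, ∃ hij : i < j, ∃ hj : j < recs.length,
      (recs.get ⟨i, lt_trans hij hj⟩).A = (recs.get ⟨j, hj⟩).A := by
    by_contra hcon
    push_neg at hcon
    have hnodup : (recs.map (·.A)).Nodup := by
      rw [List.nodup_iff_injective_get]
      intro ⟨i, hi⟩ ⟨j, hj⟩ hij
      simp only [List.length_map] at hi hj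
      simp only [List.get_eq_getElem, List.getElem_map] at hij
      ext
      rcases lt_trichotomy i j with h | h | h
      · exact absurd hij (hcon i j h hj)
      · exact h
      · exact absurd hij.symm (hcon j i h hi)
    have hsub : (recs.map (·.A)).toFinset ⊆ Inputs g := by
      intro a ha
      simp only [List.mem_toFinset, List.mem_map] at ha
      obtain ⟨r, hr, rfl⟩ := ha
      obtain ⟨i, rfl⟩ := List.mem_iff_get.mp hr
      exact hmem _ _
    have hcard : (recs.map (·.A)).toFinset.card = recs.length := by
      rw [List.toFinset_card_of_nodup hnodup, List.length_map]
    have := Finset.card_le_card hsub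
    omega
  obtain ⟨i, j, hij, hj, hA⟩ := hdup
  set r1 := recs.get ⟨i, lt_trans hij hj⟩ with hr1
  set r2 := recs.get ⟨j, hj⟩ with hr2
  have hrel : Rel r1 r2 := rel_of_chain' Rel.trans hch i j hij hj
  obtain ⟨pp, qq, Cm, hpre, hpost, hu, hslt⟩ := hrel
  have hulen : r1.u.length ≤ N := by
    have hu'len : u'.length ≤ N := by
      have := τ.yield_le
      rw [hht'] at this
      simpa [hN] using this
    rcases Nat.eq_zero_or_pos i with hi0 | hipos
    · have hre : r1 = r0 := by rw [hr1]; subst hi0; rfl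
      rw [hre]; exact hu'len
    · have hrel0 : Rel (recs.get ⟨0, by omega⟩) r1 := rel_of_chain' Rel.trans hch 0 i hipos
        (lt_trans hij hj)
      obtain ⟨pp0, qq0, C0, _, _, hu0, _⟩ := hrel0
      have h0 : (recs.get (⟨0, by omega⟩ : Fin recs.length)) = r0 := rfl
      rw [h0] at hu0
      have hcl := congrArg List.length hu0
      simp only [List.length_append] at hcl
      have : r0.u = u' := rfl
      have hcl' : u'.length = pp0.length + r1.u.length + qq0.length := hcl
      omega
  have hAA : r1.A = r2.A := hA
  by_cases hvy : pp = [] ∧ qq = []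
  · exfalso
    obtain ⟨hpp, hqq⟩ := hvy
    have huu : r2.u = r1.u := by rw [hu, hpp, hqq]; simp
    refine hmin ((r1.C.fill ((r2.s.cast huu).castNT hAA.symm)).cast r1.hw).size ?_ ⟨_, rfl⟩
    rw [PT.size_cast, r1.C.size_fill, PT.size_castNT, PT.size_cast]
    have := r1.hsz
    omega
  · have hne' : pp ++ qq ≠ [] := by
      intro hcon
      rcases List.append_eq_nil_iff.mp hcon with ⟨h1, h2⟩
      exact hvy ⟨h1, h2⟩
    have D1 := r1.C.deriv
    have D2 := Cm.deriv
    rw [← hAA] at D2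
    have D3 : g.Derives [Symbol.nonterminal r1.A] (r2.u.map Symbol.terminal) := by
      rw [hAA]; exact r2.s.deriv
    refine ⟨r1.pre, pp, r2.u, qq, r1.post, ?_, hne', ?_, ?_, ?_⟩
    · have hww : r1.pre ++ (pp ++ r2.u ++ qq) ++ r1.post = w := by
        rw [← hu]; exact r1.hw
      simpa [List.append_assoc] using hww.symm
    · have hc := congrArg List.length hu
      simp only [List.length_append] at hc ⊢
      omega
    · rw [ContextFreeGrammar.mem_language_iff]
      have E := D1.trans (subst_mid D3)
      simpa [List.map_append, List.append_assoc] using E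
    · rw [ContextFreeGrammar.mem_language_iff]
      have E1 := D1.trans (subst_mid D2)
      have E1' : g.Derives [Symbol.nonterminal g.initial]
          ((r1.pre ++ pp).map Symbol.terminal ++ Symbol.nonterminal r1.A ::
            (qq ++ r1.post).map Symbol.terminal) := by
        simpa [List.map_append, List.append_assoc] using E1
      have E2 := E1'.trans (subst_mid D2)
      have E2' : g.Derives [Symbol.nonterminal g.initial]
          ((r1.pre ++ pp ++ pp).map Symbol.terminal ++ Symbol.nonterminal r1.A ::
            (qq ++ qq ++ r1.post).map Symbol.terminal) := by
        simpa [List.map_append, List.append_assoc] using E2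
      have E3 := E2'.trans (subst_mid D3)
      simpa [List.map_append, List.append_assoc] using E3

end CFPump

namespace FC2

lemma pair_add_eq_zero {x y : ℕ × ℕ} (h : x + y = 0) : x = 0 ∧ y = 0 := by
  obtain ⟨a, b⟩ := x; obtain ⟨c, d⟩ := y
  simp [Prod.ext_iff] at h ⊢
  omega

variable {α : Type} {f : α → FreeComm2} {R : Language α}

/-- The value of a word in `ℕ × ℕ`. -/
def vL (f : α → FreeComm2) (l : List α) : ℕ × ℕ := (l.map fun a => (f a).val).sum

@[simp] lemma vL_nil : vL f [] = 0 := rfl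

@[simp] lemma vL_cons {a : α} {l : List α} : vL f (a :: l) = (f a).val + vL f l := by
  simp [vL]

@[simp] lemma vL_append {x y : List α} : vL f (x ++ y) = vL f x + vL f y := by
  simp [vL]

@[simp] lemma vL_reverse {x : List α} : vL f x.reverse = vL f x := by
  simp only [vL, List.map_reverse, List.sum_reverse]

lemma vL_eq_zero {l : List α} (h : vL f l = 0) : l = [] := by
  cases l with
  | nil => rfl
  | cons a t =>
    exfalso
    rw [vL_cons] at h
    exact (f a).property (pair_add_eq_zero h).1

lemma foldl_val (l : List α) : ∀ s : FreeComm2,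
    (l.foldl (fun s b => s * f b) s).val = s.val + vL f l := by
  induction l with
  | nil => intro s; simp
  | cons b t ih =>
    intro s
    have hmul : (s * f b).val = s.val + (f b).val := rfl
    simp only [List.foldl_cons, ih, hmul, vL_cons]
    rw [add_assoc]

lemma evalS_val {l : List α} {s : FreeComm2} (h : evalS f l = some s) :
    s.val = vL f l ∧ l ≠ [] := by
  cases l with
  | nil => simp [evalS] at h
  | cons a t =>
    simp only [evalS, Option.some.injEq] at h
    refine ⟨?_, by simp⟩
    rw [← h, foldl_val, vL_cons]

lemma evalS_of {l : List α} (h : l ≠ []) :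
    ∃ s : FreeComm2, evalS f l = some s ∧ s.val = vL f l := by
  cases l with
  | nil => exact absurd rfl h
  | cons a t => exact ⟨_, rfl, by rw [foldl_val, vL_cons]⟩

lemma mem_mulTable {u v w : List α} (hu : u ∈ R) (hv : v ∈ R) (hw : w ∈ R)
    (hun : u ≠ []) (hvn : v ≠ []) (hwn : w ≠ [])
    (hval : vL f u + vL f v = vL f w) : hashWord u v w ∈ mulTable f R := by
  obtain ⟨su, hsu, hsuv⟩ := evalS_of (f := f) hun
  obtain ⟨sv, hsv, hsvv⟩ := evalS_of (f := f) hvn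
  obtain ⟨sw, hsw, hswv⟩ := evalS_of (f := f) hwn
  refine ⟨u, v, w, hu, hv, hw, ⟨su, sv, hsu, hsv, ?_⟩, rfl⟩
  have : sw = su * sv := by
    apply Subtype.ext
    have hmul : (su * sv).val = su.val + sv.val := rfl
    rw [hmul, hsuv, hsvv, hswv, hval]
  rw [← this]; exact hsw

lemma mulTable_elim {x : List (Option α)} (hx : x ∈ mulTable f R) :
    ∃ u v w, u ∈ R ∧ v ∈ R ∧ w ∈ R ∧ u ≠ [] ∧ v ≠ [] ∧ w ≠ [] ∧
      vL f u + vL f v = vL f w ∧ x = hashWord u v w := by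
  obtain ⟨u, v, w, hu, hv, hw, ⟨su, sv, hsu, hsv, hsw⟩, rfl⟩ := hx
  obtain ⟨h1, h1n⟩ := evalS_val hsu
  obtain ⟨h2, h2n⟩ := evalS_val hsv
  obtain ⟨h3, h3n⟩ := evalS_val hsw
  refine ⟨u, v, w, hu, hv, hw, h1n, h2n, h3n, ?_, rfl⟩
  have hmul : (su * sv).val = su.val + sv.val := rfl
  rw [← h1, ← h2, ← h3, hmul]

/-- Canonical form of a two-hash word. -/
def enc (A B C : List (Option α)) : List (Option α) := A ++ none :: B ++ none :: C

lemma enc_eq (A B C : List (Option α)) :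
    enc A B C = A ++ none :: (B ++ none :: C) := by simp [enc]

lemma hashWord_enc (u v w : List α) :
    hashWord u v w = enc (u.map some) (v.map some) (w.reverse.map some) := rfl

@[simp] lemma none_not_mem_map_some (l : List α) : (none : Option α) ∉ l.map some := by
  simp

lemma firstSplit : ∀ {A A' r r' : List (Option α)},
    A ++ none :: r = A' ++ none :: r' → none ∉ A → none ∉ A' → A = A' ∧ r = r' := by
  intro A
  induction A with
  | nil =>
    intro A' r r' h hA hA'
    cases A' with
    | nil => simpa using h
    | cons a A' =>
      exfalso
      simp only [List.nil_append, List.cons_append, List.cons.injEq] at h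
      exact hA' (h.1 ▸ List.mem_cons_self)
  | cons a A ih =>
    intro A' r r' h hA hA'
    cases A' with
    | nil =>
      exfalso
      simp only [List.cons_append, List.nil_append, List.cons.injEq] at h
      exact hA (h.1 ▸ List.mem_cons_self)
    | cons a' A' =>
      simp only [List.cons_append, List.cons.injEq] at h
      obtain ⟨rfl, h2⟩ := h
      obtain ⟨rfl, rfl⟩ := ih h2 (fun hm => hA (List.mem_cons_of_mem _ hm))
        (fun hm => hA' (List.mem_cons_of_mem _ hm))
      exact ⟨rfl, rfl⟩

lemma parse_unique {A B C A' B' C' : List (Option α)}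
    (h : enc A B C = enc A' B' C') (hA : none ∉ A) (hA' : none ∉ A')
    (hB : none ∉ B) (hB' : none ∉ B') : A = A' ∧ B = B' ∧ C = C' := by
  rw [enc_eq, enc_eq] at h
  obtain ⟨rfl, h2⟩ := firstSplit h hA hA'
  obtain ⟨rfl, rfl⟩ := firstSplit h2 hB hB'
  exact ⟨rfl, rfl, rfl⟩

lemma cut2 {X Y B C : List (Option α)} (h : X ++ Y = B ++ none :: C) (hB : none ∉ B) :
    (∃ B1 B2, B = B1 ++ B2 ∧ X = B1 ∧ Y = B2 ++ none :: C) ∨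
    (∃ C1 C2, C = C1 ++ C2 ∧ X = B ++ none :: C1 ∧ Y = C2) := by
  rcases List.append_eq_append_iff.mp h with ⟨b', hb1, hb2⟩ | ⟨c', hc1, hc2⟩
  · exact Or.inl ⟨X, b', hb1, rfl, hb2⟩
  · cases c' with
    | nil => exact Or.inl ⟨B, [], by simp, by simpa using hc1, by simpa using hc2.symm⟩
    | cons o c'' =>
      have hh : none = o ∧ C = c'' ++ Y := by
        simp only [List.cons_append, List.cons.injEq] at hc2
        exact hc2
      obtain ⟨rfl, hC⟩ := hh
      exact Or.inr ⟨c'', Y, hC, by simpa using hc1, rfl⟩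

lemma cut3 {X Y A B C : List (Option α)} (h : X ++ Y = enc A B C)
    (hA : none ∉ A) (hB : none ∉ B) :
    (∃ A1 A2, A = A1 ++ A2 ∧ X = A1 ∧ Y = enc A2 B C) ∨
    (∃ B1 B2, B = B1 ++ B2 ∧ X = A ++ none :: B1 ∧ Y = B2 ++ none :: C) ∨
    (∃ C1 C2, C = C1 ++ C2 ∧ X = enc A B C1 ∧ Y = C2) := by
  rw [enc_eq] at h
  rcases List.append_eq_append_iff.mp h with ⟨a', ha1, ha2⟩ | ⟨c', hc1, hc2⟩
  · exact Or.inl ⟨X, a', ha1, rfl, by rw [ha2, enc_eq]⟩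
  · cases c' with
    | nil =>
      refine Or.inl ⟨A, [], by simp, by simpa using hc1, ?_⟩
      rw [enc_eq]
      simpa using hc2.symm
    | cons o c'' =>
      have hh : none = o ∧ B ++ none :: C = c'' ++ Y := by
        simp only [List.cons_append, List.cons.injEq] at hc2
        exact hc2
      obtain ⟨rfl, hBC⟩ := hh
      have hX : X = A ++ none :: c'' := by simpa using hc1
      rcases cut2 hBC.symm hB with ⟨B1, B2, hB12, hXB, hY⟩ | ⟨C1, C2, hC12, hXC, hY⟩
      · exact Or.inr (Or.inl ⟨B1, B2, hB12, by rw [hX, hXB], hY⟩)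
      · exact Or.inr (Or.inr ⟨C1, C2, hC12, by rw [hX, hXC, enc_eq], hY⟩)

/-- A none-free prefix stays within the first component. -/
lemma nfp3 {X Y A B C : List (Option α)} (h : X ++ Y = enc A B C)
    (hX : none ∉ X) (hA : none ∉ A) (hB : none ∉ B) :
    ∃ A2, A = X ++ A2 ∧ Y = enc A2 B C := by
  rcases cut3 h hA hB with ⟨A1, A2, hA12, rfl, hY⟩ | ⟨B1, B2, _, hX', _⟩ | ⟨C1, C2, _, hX', _⟩
  · exact ⟨A2, hA12, hY⟩
  · exact absurd (hX' ▸ (by simp : (none : Option α) ∈ A ++ none :: B1)) hX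
  · exact absurd (hX' ▸ (by simp [enc_eq] : (none : Option α) ∈ enc A B C1)) hX

lemma nfp2 {X Y B C : List (Option α)} (h : X ++ Y = B ++ none :: C)
    (hX : none ∉ X) (hB : none ∉ B) :
    ∃ B2, B = X ++ B2 ∧ Y = B2 ++ none :: C := by
  rcases cut2 h hB with ⟨B1, B2, hB12, rfl, hY⟩ | ⟨C1, C2, _, hX', _⟩
  · exact ⟨B2, hB12, hY⟩
  · exact absurd (hX' ▸ (by simp : (none : Option α) ∈ B ++ none :: C1)) hX

lemma destrip {l : List α} {X Y : List (Option α)} (h : l.map some = X ++ Y) :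
    ∃ x y : List α, l = x ++ y ∧ X = x.map some ∧ Y = y.map some := by
  induction l generalizing X with
  | nil =>
    cases X with
    | nil => exact ⟨[], [], rfl, rfl, by simpa using h⟩
    | cons x X => simp at h
  | cons a l ih =>
    cases X with
    | nil => exact ⟨[], a :: l, rfl, rfl, by simpa using h.symm⟩
    | cons x X =>
      simp only [List.map_cons, List.cons_append, List.cons.injEq] at h
      obtain ⟨rfl, h2⟩ := h
      obtain ⟨x', y', rfl, rfl, rfl⟩ := ih h2
      exact ⟨a :: x', y', rfl, rfl, rfl⟩

lemma exists_of_noneFree {X : List (Option α)} (hX : none ∉ X) :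
    ∃ x : List α, X = x.map some := by
  induction X with
  | nil => exact ⟨[], rfl⟩
  | cons a X ih =>
    obtain ⟨x, rfl⟩ := ih (fun hm => hX (List.mem_cons_of_mem _ hm))
    cases a with
    | none => exact absurd (List.mem_cons_self) hX
    | some b => exact ⟨b :: x, rfl⟩

lemma map_some_inj {x y : List α} (h : x.map some = y.map some) : x = y :=
  List.map_injective_iff.mpr (Option.some_injective α) h

/-- Number of `none`s. -/
def cnt (l : List (Option α)) : ℕ := l.countP (fun x => x.isNone)

@[simp] lemma cnt_append (x y : List (Option α)) : cnt (x ++ y) = cnt x + cnt y :=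
  List.countP_append

@[simp] lemma cnt_cons_none (l : List (Option α)) : cnt (none :: l) = cnt l + 1 := by
  simp [cnt, List.countP_cons]

@[simp] lemma cnt_reverse (l : List (Option α)) : cnt l.reverse = cnt l := by
  simp [cnt, List.countP_eq_length_filter, List.filter_reverse]

@[simp] lemma cnt_map_some (l : List α) : cnt (l.map some) = 0 := by
  simp [cnt, List.countP_eq_zero]

lemma cnt_eq_zero {l : List (Option α)} (h : cnt l = 0) : none ∉ l := by
  intro hm
  have := (List.countP_eq_zero.mp h) none hm
  simp at this

lemma cnt_hashWord (u v w : List α) : cnt (hashWord u v w) = 2 := by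
  rw [hashWord_enc, enc_eq]
  simp

lemma hashWord_length (u v w : List α) :
    (hashWord u v w).length = u.length + v.length + w.length + 2 := by
  rw [hashWord_enc, enc_eq]; simp; omega

lemma sum_zero_contra {f : α → FreeComm2} {p2 p4 : List α} {P2 P4 : List (Option α)}
    (h2 : P2 = p2.map some) (h4 : P4 = p4.map some)
    (hz : vL f p2 + vL f p4 = 0) (hne : P2 ++ P4 ≠ []) : False := by
  obtain ⟨z2, z4⟩ := pair_add_eq_zero hz
  rw [h2, h4, vL_eq_zero z2, vL_eq_zero z4] at hne
  simp at hne

def PumpHyp (f : α → FreeComm2) (R : Language α) (N : ℕ) : Prop :=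
  ∀ x ∈ mulTable f R, N ≤ x.length →
    ∃ P1 P2 P3 P4 P5 : List (Option α), x = P1 ++ P2 ++ P3 ++ P4 ++ P5 ∧ P2 ++ P4 ≠ [] ∧
      (P2 ++ P3 ++ P4).length ≤ N ∧ P1 ++ P3 ++ P5 ∈ mulTable f R ∧
      P1 ++ P2 ++ P2 ++ P3 ++ P4 ++ P4 ++ P5 ∈ mulTable f R

lemma cancel_aux {x y : ℕ × ℕ} (h : x + y = x) : y = 0 := by
  have h2 : x + y = x + 0 := by rw [add_zero]; exact h
  exact add_left_cancel h2

lemma nf_right {l : List α} {X Y : List (Option α)} (h : l.map some = X ++ Y) :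
    none ∉ Y := by
  obtain ⟨x, y, _, _, hY⟩ := destrip h
  rw [hY]; simp

lemma delete {f : α → FreeComm2} {R : Language α} {N : ℕ} (hp : PumpHyp f R N)
    {u v w : List α} (hu : u ∈ R) (hv : v ∈ R) (hw : w ∈ R)
    (hun : u ≠ []) (hvn : v ≠ []) (hwn : w ≠ [])
    (hval : vL f u + vL f v = vL f w) (hlen : N < v.length) :
    ∃ (d : ℕ × ℕ) (v' w' : List α), d ≠ 0 ∧ v' ∈ R ∧ w' ∈ R ∧ v' ≠ [] ∧ w' ≠ [] ∧
      vL f v' + d = vL f v ∧ vL f w' + d = vL f w ∧ w'.length ≤ w.length ∧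
      ∀ k, k + N ≤ w'.length → w'.take k = w.take k := by
  have hmem := mem_mulTable hu hv hw hun hvn hwn hval
  have hxlen : N ≤ (hashWord u v w).length := by rw [hashWord_length]; omega
  obtain ⟨P1, P2, P3, P4, P5, hx, hne24, hlen234, ht0, ht2⟩ := hp _ hmem hxlen
  have hcx : cnt (P1 ++ P2 ++ P3 ++ P4 ++ P5) = 2 := by rw [← hx, cnt_hashWord]
  obtain ⟨u2, v2, w2, _, _, _, _, _, _, _, ht2e⟩ := mulTable_elim ht2
  have hc2 : cnt (P1 ++ P2 ++ P2 ++ P3 ++ P4 ++ P4 ++ P5) = 2 := by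
    rw [ht2e, cnt_hashWord]
  simp only [cnt_append] at hcx hc2
  have hP2 : none ∉ P2 := cnt_eq_zero (by omega)
  have hP4 : none ∉ P4 := cnt_eq_zero (by omega)
  obtain ⟨u₀, v₀, w₀, hu₀, hv₀, hw₀, hu₀n, hv₀n, hw₀n, hval₀, he₀⟩ := mulTable_elim ht0
  have hAnf : (none : Option α) ∉ u.map some := by simp
  have hBnf : (none : Option α) ∉ v.map some := by simp
  have heq : P1 ++ (P2 ++ (P3 ++ (P4 ++ P5)))
      = enc (u.map some) (v.map some) (w.reverse.map some) := by
    rw [← hashWord_enc, hx]; simp [List.append_assoc]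
  have hlens : P2.length + P3.length + P4.length ≤ N := by
    have := hlen234; simp only [List.length_append] at this; omega
  rcases cut3 heq hAnf hBnf with ⟨A1, A2, hA12, hP1, hY1⟩ | ⟨B1, B2, hB12, hP1, hY1⟩
    | ⟨C1, C2, hC12, hP1, hY1⟩
  · -- first boundary inside the u-block
    obtain ⟨A3, hA23, hY2⟩ := nfp3 hY1 hP2 (nf_right hA12) hBnf
    have hA13 : u.map some = (A1 ++ P2) ++ A3 := by
      rw [hA12, hA23]; simp [List.append_assoc]
    rcases cut3 hY2 (nf_right hA13) hBnf with
      ⟨A31, A32, hA3, hP3, hY3⟩ | ⟨B1, B2, hB12, hP3, hY3⟩ | ⟨C1, C2, hC12, hP3, hY3⟩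
    · -- LEAF AA
      exfalso
      have hA14 : u.map some = (A1 ++ P2 ++ A31) ++ A32 := by
        rw [hA13, hA3]; simp [List.append_assoc]
      obtain ⟨A5, hA45, hY4⟩ := nfp3 hY3 hP4 (nf_right hA14) hBnf
      have hAfull : u.map some = A1 ++ (P2 ++ (A31 ++ (P4 ++ A5))) := by
        rw [hA14, hA45]; simp [List.append_assoc]
      obtain ⟨a1, rest1, hu1, hA1e, hrest1⟩ := destrip hAfull
      obtain ⟨p2, rest2, hu2, hP2e, hrest2⟩ := destrip hrest1.symm
      obtain ⟨a31, rest3, hu3, hA31e, hrest3⟩ := destrip hrest2.symm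
      obtain ⟨p4, a5, hu4, hP4e, hA5e⟩ := destrip hrest3.symm
      have hsplit : P1 ++ P3 ++ P5 = enc ((a1 ++ a31 ++ a5).map some) (v.map some) (w.reverse.map some) := by
        rw [hP1, hP3, hY4, enc_eq, enc_eq, hA1e, hA31e, hA5e]
        simp [List.append_assoc, List.map_append]
      have ht0eq : enc (u₀.map some) (v₀.map some) (w₀.reverse.map some)
          = enc ((a1 ++ a31 ++ a5).map some) (v.map some) (w.reverse.map some) := by
        rw [← hashWord_enc, ← he₀]; exact hsplit
      obtain ⟨he1, he2, he3⟩ := parse_unique ht0eq (by simp) (by simp) (by simp) (by simp)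
      have hvv : v₀ = v := map_some_inj he2
      have hww : w₀ = w := by
        have h' := congrArg List.reverse (map_some_inj he3)
        simpa using h'
      have huu : u₀ = a1 ++ a31 ++ a5 := map_some_inj he1
      rw [hvv, hww, huu] at hval₀
      have hueq : vL f u = vL f (a1 ++ a31 ++ a5) + (vL f p2 + vL f p4) := by
        rw [hu1, hu2, hu3, hu4]; simp only [vL_append]; abel
      have hz : vL f p2 + vL f p4 = 0 := by
        apply cancel_aux (x := vL f (a1 ++ a31 ++ a5) + vL f v)
        conv_rhs => rw [hval₀]
        rw [← hval, hueq]; abel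
      exact sum_zero_contra hP2e hP4e hz hne24
    · -- LEAF AB
      exfalso
      obtain ⟨B3, hB23, hY4⟩ := nfp2 hY3 hP4 (nf_right hB12)
      have hAfull : u.map some = A1 ++ (P2 ++ A3) := by rw [hA12, hA23]
      obtain ⟨a1, rest1, hu1, hA1e, hrest1⟩ := destrip hAfull
      obtain ⟨p2, a3, hu2, hP2e, hA3e⟩ := destrip hrest1.symm
      have hBfull : v.map some = B1 ++ (P4 ++ B3) := by rw [hB12, hB23]
      obtain ⟨b1, rest2, hv1, hB1e, hrest2⟩ := destrip hBfull
      obtain ⟨p4, b3, hv2, hP4e, hB3e⟩ := destrip hrest2.symm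
      have hsplit : P1 ++ P3 ++ P5 = enc ((a1 ++ a3).map some) ((b1 ++ b3).map some) (w.reverse.map some) := by
        rw [hP1, hP3, hY4, enc_eq, hA1e, hA3e, hB1e, hB3e]
        simp [List.append_assoc, List.map_append]
      have ht0eq : enc (u₀.map some) (v₀.map some) (w₀.reverse.map some)
          = enc ((a1 ++ a3).map some) ((b1 ++ b3).map some) (w.reverse.map some) := by
        rw [← hashWord_enc, ← he₀]; exact hsplit
      obtain ⟨he1, he2, he3⟩ := parse_unique ht0eq (by simp) (by simp) (by simp) (by simp)
      have huu : u₀ = a1 ++ a3 := map_some_inj he1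
      have hvv : v₀ = b1 ++ b3 := map_some_inj he2
      have hww : w₀ = w := by
        have h' := congrArg List.reverse (map_some_inj he3)
        simpa using h'
      rw [huu, hvv, hww] at hval₀
      have hueq : vL f u = vL f (a1 ++ a3) + vL f p2 := by
        rw [hu1, hu2]; simp only [vL_append]; abel
      have hveq : vL f v = vL f (b1 ++ b3) + vL f p4 := by
        rw [hv1, hv2]; simp only [vL_append]; abel
      have hz : vL f p2 + vL f p4 = 0 := by
        apply cancel_aux (x := vL f (a1 ++ a3) + vL f (b1 ++ b3))
        conv_rhs => rw [hval₀]
        rw [← hval, hueq, hveq]; abel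
      exact sum_zero_contra hP2e hP4e hz hne24
    · -- LEAF AC : v is inside P3
      exfalso
      have := congrArg List.length hP3
      rw [enc_eq] at this
      simp only [List.length_append, List.length_cons, List.length_map] at this
      omega
  · -- first `none` inside P1
    obtain ⟨B3, hB23, hY2⟩ := nfp2 hY1 hP2 (nf_right hB12)
    have hB13 : v.map some = (B1 ++ P2) ++ B3 := by
      rw [hB12, hB23]; simp [List.append_assoc]
    rcases cut2 hY2 (nf_right hB13) with
      ⟨B31, B4, hB34, hP3, hY3⟩ | ⟨C1, C2, hC12, hP3, hY3⟩
    · -- LEAF BB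
      exfalso
      have hB14 : v.map some = (B1 ++ P2 ++ B31) ++ B4 := by
        rw [hB13, hB34]; simp [List.append_assoc]
      obtain ⟨B5, hB45, hY4⟩ := nfp2 hY3 hP4 (nf_right hB14)
      have hBfull : v.map some = B1 ++ (P2 ++ (B31 ++ (P4 ++ B5))) := by
        rw [hB14, hB45]; simp [List.append_assoc]
      obtain ⟨b1, rest1, hv1, hB1e, hrest1⟩ := destrip hBfull
      obtain ⟨p2, rest2, hv2, hP2e, hrest2⟩ := destrip hrest1.symm
      obtain ⟨b31, rest3, hv3, hB31e, hrest3⟩ := destrip hrest2.symm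
      obtain ⟨p4, b5, hv4, hP4e, hB5e⟩ := destrip hrest3.symm
      have hsplit : P1 ++ P3 ++ P5 = enc (u.map some) ((b1 ++ b31 ++ b5).map some) (w.reverse.map some) := by
        rw [hP1, hP3, hY4, enc_eq, hB1e, hB31e, hB5e]
        simp [List.append_assoc, List.map_append]
      have ht0eq : enc (u₀.map some) (v₀.map some) (w₀.reverse.map some)
          = enc (u.map some) ((b1 ++ b31 ++ b5).map some) (w.reverse.map some) := by
        rw [← hashWord_enc, ← he₀]; exact hsplit
      obtain ⟨he1, he2, he3⟩ := parse_unique ht0eq (by simp) (by simp) (by simp) (by simp)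
      have huu : u₀ = u := map_some_inj he1
      have hvv : v₀ = b1 ++ b31 ++ b5 := map_some_inj he2
      have hww : w₀ = w := by
        have h' := congrArg List.reverse (map_some_inj he3)
        simpa using h'
      rw [huu, hvv, hww] at hval₀
      have hveq : vL f v = vL f (b1 ++ b31 ++ b5) + (vL f p2 + vL f p4) := by
        rw [hv1, hv2, hv3, hv4]; simp only [vL_append]; abel
      have hz : vL f p2 + vL f p4 = 0 := by
        apply cancel_aux (x := vL f u + vL f (b1 ++ b31 ++ b5))
        conv_rhs => rw [hval₀]
        rw [← hval, hveq]; abel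
      exact sum_zero_contra hP2e hP4e hz hne24
    · -- LEAF BC : the good case
      have hBfull : v.map some = B1 ++ (P2 ++ B3) := by rw [hB12, hB23]
      obtain ⟨b1, rest1, hv1, hB1e, hrest1⟩ := destrip hBfull
      obtain ⟨p2, b3, hv2, hP2e, hB3e⟩ := destrip hrest1.symm
      have hCfull : w.reverse.map some = C1 ++ (P4 ++ P5) := by rw [hC12, ← hY3]
      obtain ⟨c1, rest2, hw1, hC1e, hrest2⟩ := destrip hCfull
      obtain ⟨p4, p5, hw2, hP4e, hP5e⟩ := destrip hrest2.symm
      have hsplit : P1 ++ P3 ++ P5 = enc (u.map some) ((b1 ++ b3).map some) ((c1 ++ p5).map some) := by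
        rw [hP1, hP3, hP5e, enc_eq, hB1e, hB3e, hC1e]
        simp [List.append_assoc, List.map_append]
      have ht0eq : enc (u₀.map some) (v₀.map some) (w₀.reverse.map some)
          = enc (u.map some) ((b1 ++ b3).map some) ((c1 ++ p5).map some) := by
        rw [← hashWord_enc, ← he₀]; exact hsplit
      obtain ⟨he1, he2, he3⟩ := parse_unique ht0eq (by simp) (by simp) (by simp) (by simp)
      have huu : u₀ = u := map_some_inj he1
      have hvv : v₀ = b1 ++ b3 := map_some_inj he2
      have hwwrev : w₀.reverse = c1 ++ p5 := map_some_inj he3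
      have hww : w₀ = p5.reverse ++ c1.reverse := by
        have h' := congrArg List.reverse hwwrev
        simpa using h'
      have hwfull : w = p5.reverse ++ (p4.reverse ++ c1.reverse) := by
        have h1 : w.reverse = c1 ++ (p4 ++ p5) := by rw [hw1, hw2]
        have h' := congrArg List.reverse h1
        simpa [List.append_assoc] using h'
      rw [huu, hvv] at hval₀
      have hveq : vL f v = vL f (b1 ++ b3) + vL f p2 := by
        rw [hv1, hv2]; simp only [vL_append]; abel
      have hweq : vL f w = vL f w₀ + vL f p4 := by
        rw [hwfull, hww]; simp only [vL_append, vL_reverse]; abel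
      have hd : vL f p4 = vL f p2 := by
        have key : vL f w₀ + vL f p4 = vL f w₀ + vL f p2 := by
          rw [← hweq, ← hval, hveq, ← hval₀]; abel
        exact add_left_cancel key
      refine ⟨vL f p4, v₀, w₀, ?_, hv₀, hw₀, hv₀n, hw₀n, ?_, ?_, ?_, ?_⟩
      · intro h0
        have hz : vL f p2 + vL f p4 = 0 := by rw [← hd, h0, add_zero]
        exact sum_zero_contra hP2e hP4e hz hne24
      · rw [hvv, hd, hveq]
      · rw [hweq]
      · have h1 := congrArg List.length hwfull
        have h2 := congrArg List.length hww
        simp only [List.length_append, List.length_reverse] at h1 h2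
        omega
      · intro k hk
        have hlc1 : c1.length + p4.length ≤ N := by
          have h3 := congrArg List.length hP3
          have hc1 := congrArg List.length hC1e
          have hp4 := congrArg List.length hP4e
          simp only [List.length_append, List.length_cons, List.length_map] at h3 hc1 hp4
          omega
        have hk5 : k ≤ p5.reverse.length := by
          have h2 := congrArg List.length hww
          simp only [List.length_append, List.length_reverse] at h2
          simp only [List.length_reverse]
          omega
        rw [hww, hwfull, List.take_append_of_le_length hk5,
          List.take_append_of_le_length hk5]
  · -- LEAF CC : both `none`s in P1
    exfalso
    have hCfull : w.reverse.map some = C1 ++ (P2 ++ (P3 ++ (P4 ++ P5))) := by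
      rw [hC12, ← hY1]
    obtain ⟨c1, rest1, hw1, hC1e, hrest1⟩ := destrip hCfull
    obtain ⟨p2, rest2, hw2, hP2e, hrest2⟩ := destrip hrest1.symm
    obtain ⟨p3, rest3, hw3, hP3e, hrest3⟩ := destrip hrest2.symm
    obtain ⟨p4, p5, hw4, hP4e, hP5e⟩ := destrip hrest3.symm
    have hsplit : P1 ++ P3 ++ P5
        = enc (u.map some) (v.map some) ((c1 ++ p3 ++ p5).map some) := by
      rw [hP1, hP3e, hP5e, enc_eq, enc_eq, hC1e]
      simp [List.append_assoc, List.map_append]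
    have ht0eq : enc (u₀.map some) (v₀.map some) (w₀.reverse.map some)
        = enc (u.map some) (v.map some) ((c1 ++ p3 ++ p5).map some) := by
      rw [← hashWord_enc, ← he₀]; exact hsplit
    obtain ⟨he1, he2, he3⟩ := parse_unique ht0eq (by simp) (by simp) (by simp) (by simp)
    have huu : u₀ = u := map_some_inj he1
    have hvv : v₀ = v := map_some_inj he2
    have hwwrev : w₀.reverse = c1 ++ p3 ++ p5 := map_some_inj he3
    rw [huu, hvv] at hval₀
    have hweq : vL f w = vL f w₀ + (vL f p2 + vL f p4) := by
      have hwrev : w.reverse = c1 ++ (p2 ++ (p3 ++ (p4 ++ p5))) := by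
        rw [hw1, hw2, hw3, hw4]
      have h1 : vL f w = vL f c1 + (vL f p2 + (vL f p3 + (vL f p4 + vL f p5))) := by
        rw [← vL_reverse, hwrev]; simp only [vL_append]
      have h2 : vL f w₀ = vL f c1 + vL f p3 + vL f p5 := by
        rw [← vL_reverse (x := w₀), hwwrev]; simp only [vL_append]
      rw [h1, h2]; abel
    have hz : vL f p2 + vL f p4 = 0 := by
      apply cancel_aux (x := vL f w₀)
      conv_rhs => rw [← hval₀]
      rw [hval, hweq]
    exact sum_zero_contra hP2e hP4e hz hne24

lemma vL_take_drop (f : α → FreeComm2) (l : List α) (k : ℕ) :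
    vL f l = vL f (l.take k) + vL f (l.drop k) := by
  conv_lhs => rw [← List.take_append_drop k l]
  rw [vL_append]

lemma vL_take_mono (f : α → FreeComm2) (l : List α) {k k' : ℕ} (h : k ≤ k') :
    (vL f (l.take k)).1 ≤ (vL f (l.take k')).1 ∧
    (vL f (l.take k)).2 ≤ (vL f (l.take k')).2 := by
  have hk : k' = k + (k' - k) := by omega
  rw [hk, List.take_add, vL_append]
  constructor <;> simp

section Descent

variable {f : α → FreeComm2} {R : Language α} {N M : ℕ}

lemma descent2 (hp : PumpHyp f R N)
    (hrep : ∀ x : ℕ × ℕ, x ≠ 0 → ∃ z, z ∈ R ∧ z ≠ [] ∧ vL f z = x)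
    (hle_mul : ∀ l : List α, (vL f l).1 + (vL f l).2 ≤ M * l.length) :
    ∀ q p z, 1 ≤ p → z ∈ R → z ≠ [] → vL f z = (p, q) →
    ∃ z' q', z' ∈ R ∧ z' ≠ [] ∧ vL f z' = (p, q') ∧ q' ≤ N * M ∧ z'.length ≤ z.length ∧
      ∀ k, k + N ≤ z'.length → z'.take k = z.take k := by
  intro q
  induction q using Nat.strong_induction_on with
  | _ q ih =>
    intro p z hp1 hz hzn hzv
    rcases le_or_gt q (N * M) with hq | hq
    · exact ⟨z, q, hz, hzn, hzv, hq, le_refl _, fun k _ => rfl⟩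
    · obtain ⟨u, hu, hun, huv⟩ := hrep (p, 0) (by simp [Prod.ext_iff]; omega)
      obtain ⟨v, hv, hvn, hvv⟩ := hrep (0, q) (by simp [Prod.ext_iff]; omega)
      have hval : vL f u + vL f v = vL f z := by
        rw [huv, hvv, hzv, Prod.mk_add_mk]; simp
      have hlenv : N < v.length := by
        by_contra hcon
        push_neg at hcon
        have h1 := hle_mul v
        rw [hvv] at h1
        have h2 : M * v.length ≤ M * N := Nat.mul_le_mul_left _ hcon
        simp at h1
        have : N * M = M * N := Nat.mul_comm _ _
        omega
      obtain ⟨d, v', z', hd0, hv', hz', hv'n, hz'n, hvd, hzd, hlen', htake'⟩ :=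
        delete hp hu hv hz hun hvn hzn hval hlenv
      have hd1 : d.1 = 0 := by
        have h1 := congrArg Prod.fst hvd
        rw [hvv] at h1
        simp at h1
        omega
      have hd2 : 1 ≤ d.2 := by
        rcases Nat.eq_zero_or_pos d.2 with h0 | h0
        · exact absurd (Prod.ext hd1 h0) hd0
        · exact h0
      have hz'1 : (vL f z').1 = p := by
        have h1 := congrArg Prod.fst hzd
        rw [hzv] at h1
        simp [hd1] at h1
        omega
      have hz'2 : (vL f z').2 + d.2 = q := by
        have h1 := congrArg Prod.snd hzd
        rw [hzv] at h1
        simpa using h1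
      obtain ⟨z'', q'', hz'', hz''n, hz''v, hq'', hlen'', htake''⟩ :=
        ih (vL f z').2 (by omega) p z' hp1 hz' hz'n (Prod.ext hz'1 rfl)
      refine ⟨z'', q'', hz'', hz''n, hz''v, hq'', le_trans hlen'' hlen', ?_⟩
      intro k hk
      rw [htake'' k hk, htake' k (by omega)]

lemma descent1 (hp : PumpHyp f R N)
    (hrep : ∀ x : ℕ × ℕ, x ≠ 0 → ∃ z, z ∈ R ∧ z ≠ [] ∧ vL f z = x)
    (hle_mul : ∀ l : List α, (vL f l).1 + (vL f l).2 ≤ M * l.length) :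
    ∀ p q z, 1 ≤ q → z ∈ R → z ≠ [] → vL f z = (p, q) →
    ∃ z' p', z' ∈ R ∧ z' ≠ [] ∧ vL f z' = (p', q) ∧ p' ≤ N * M ∧ z'.length ≤ z.length ∧
      ∀ k, k + N ≤ z'.length → z'.take k = z.take k := by
  intro p
  induction p using Nat.strong_induction_on with
  | _ p ih =>
    intro q z hq1 hz hzn hzv
    rcases le_or_gt p (N * M) with hple | hpgt
    · exact ⟨z, p, hz, hzn, hzv, hple, le_refl _, fun k _ => rfl⟩
    · obtain ⟨u, hu, hun, huv⟩ := hrep (0, q) (by simp [Prod.ext_iff]; omega)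
      obtain ⟨v, hv, hvn, hvv⟩ := hrep (p, 0) (by simp [Prod.ext_iff]; omega)
      have hval : vL f u + vL f v = vL f z := by
        rw [huv, hvv, hzv, Prod.mk_add_mk]; simp
      have hlenv : N < v.length := by
        by_contra hcon
        push_neg at hcon
        have h1 := hle_mul v
        rw [hvv] at h1
        have h2 : M * v.length ≤ M * N := Nat.mul_le_mul_left _ hcon
        simp at h1
        have : N * M = M * N := Nat.mul_comm _ _
        omega
      obtain ⟨d, v', z', hd0, hv', hz', hv'n, hz'n, hvd, hzd, hlen', htake'⟩ :=
        delete hp hu hv hz hun hvn hzn hval hlenv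
      have hd2 : d.2 = 0 := by
        have h1 := congrArg Prod.snd hvd
        rw [hvv] at h1
        simp at h1
        omega
      have hd1 : 1 ≤ d.1 := by
        rcases Nat.eq_zero_or_pos d.1 with h0 | h0
        · exact absurd (Prod.ext h0 hd2) hd0
        · exact h0
      have hz'2 : (vL f z').2 = q := by
        have h1 := congrArg Prod.snd hzd
        rw [hzv] at h1
        simp [hd2] at h1
        omega
      have hz'1 : (vL f z').1 + d.1 = p := by
        have h1 := congrArg Prod.fst hzd
        rw [hzv] at h1
        simpa using h1
      obtain ⟨z'', p'', hz'', hz''n, hz''v, hp'', hlen'', htake''⟩ :=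
        ih (vL f z').1 (by omega) q z' hq1 hz' hz'n (Prod.ext rfl hz'2)
      refine ⟨z'', p'', hz'', hz''n, hz''v, hp'', le_trans hlen'' hlen', ?_⟩
      intro k hk
      rw [htake'' k hk, htake' k (by omega)]

end Descent

end FC2

open FC2

/-- The free commutative semigroup on two generators is not word hyperbolic. -/
theorem freeComm2_not_wordHyperbolic : ¬ WordHyperbolic FreeComm2 := by
  rintro ⟨α, finα, f, hchoice, R, hreg, ⟨hnil, hcomb⟩, hCF⟩
  obtain ⟨g, hg⟩ := hCF
  obtain ⟨N, hNpos, hpump0⟩ := CFPump.pumping g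
  have hp : PumpHyp f R N := by
    intro x hx hxlen
    obtain ⟨P1, P2, P3, P4, P5, h1, h2, h3, h4, h5⟩ := hpump0 x (by rw [hg]; exact hx) hxlen
    exact ⟨P1, P2, P3, P4, P5, h1, h2, h3, by rw [← hg]; exact h4, by rw [← hg]; exact h5⟩
  -- representatives
  have hrep : ∀ x : ℕ × ℕ, x ≠ 0 → ∃ z, z ∈ R ∧ z ≠ [] ∧ vL f z = x := by
    intro x hx
    obtain ⟨z, hzR, hze⟩ := hcomb ⟨x, hx⟩
    obtain ⟨hval, hzn⟩ := evalS_val hze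
    exact ⟨z, hzR, hzn, hval.symm ▸ rfl⟩
  -- the bound M
  set M := Finset.univ.sup (fun a : α => (f a).val.1 + (f a).val.2) with hM
  have hone : ∀ a : α, 1 ≤ (f a).val.1 + (f a).val.2 := by
    intro a
    by_contra hcon
    push_neg at hcon
    have h1 : (f a).val.1 = 0 := by omega
    have h2 : (f a).val.2 = 0 := by omega
    exact (f a).property (Prod.ext (by simp [h1]) (by simp [h2]))
  have hle_sup : ∀ a : α, (f a).val.1 + (f a).val.2 ≤ M := by
    intro a
    rw [hM]
    exact Finset.le_sup (f := fun a : α => (f a).val.1 + (f a).val.2) (Finset.mem_univ a)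
  have hle_mul : ∀ l : List α, (vL f l).1 + (vL f l).2 ≤ M * l.length := by
    intro l
    induction l with
    | nil => simp
    | cons a l ih =>
      have ha := hle_sup a
      have hmul : M * (l.length + 1) = M * l.length + M := by ring
      simp only [vL_cons, Prod.fst_add, Prod.snd_add, List.length_cons, hmul]
      omega
  have hlen_le : ∀ l : List α, l.length ≤ (vL f l).1 + (vL f l).2 := by
    intro l
    induction l with
    | nil => simp
    | cons a l ih =>
      have ha := hone a
      simp only [vL_cons, Prod.fst_add, Prod.snd_add, List.length_cons]
      omega
  have hM1 : 1 ≤ M := by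
    obtain ⟨z, hzR, hzn, hzv⟩ := hrep (1, 0) (by simp [Prod.ext_iff])
    cases z with
    | nil => exact absurd rfl hzn
    | cons a t => exact le_trans (hone a) (hle_sup a)
  -- the key parameter
  set P := 2 * M * N + 1 with hP
  have hPP : P = 2 * (M * N) + 1 := by rw [hP]; ring
  obtain ⟨z, hzR, hzn, hzv⟩ := hrep (P, P) (by simp [Prod.ext_iff])
  -- run 1 : reduce the second coordinate
  obtain ⟨ω, qs, hω, hωn, hωv, hqs, hωlen, hωtake⟩ :=
    descent2 hp hrep hle_mul P P z (by omega) hzR hzn hzv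
  -- run 2 : reduce the first coordinate
  obtain ⟨ω₂, ps, hω₂, hω₂n, hω₂v, hps, hω₂len, hω₂take⟩ :=
    descent1 hp hrep hle_mul P P z (by omega) hzR hzn hzv
  -- ω is long
  have hωlong : 2 * N < ω.length := by
    by_contra hcon
    push_neg at hcon
    have h1 := hle_mul ω
    rw [hωv] at h1
    have h2 : M * ω.length ≤ M * (2 * N) := Nat.mul_le_mul_left _ hcon
    simp at h1
    have h3 : M * (2 * N) = 2 * (M * N) := by ring
    omega
  have hω₂long : 2 * N < ω₂.length := by
    by_contra hcon
    push_neg at hcon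
    have h1 := hle_mul ω₂
    rw [hω₂v] at h1
    have h2 : M * ω₂.length ≤ M * (2 * N) := Nat.mul_le_mul_left _ hcon
    simp at h1
    have h3 : M * (2 * N) = 2 * (M * N) := by ring
    omega
  set k₁ := ω.length - N with hk₁
  set k₂ := ω₂.length - N with hk₂
  -- prefixes of z agree with prefixes of ω and ω₂
  have ht1 : z.take k₁ = ω.take k₁ := (hωtake k₁ (by omega)).symm
  have ht2 : z.take k₂ = ω₂.take k₂ := (hω₂take k₂ (by omega)).symm
  -- value estimates for ω.take k₁
  have hsplit1 := vL_take_drop f ω k₁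
  have hdrop1 : (vL f (ω.drop k₁)).1 + (vL f (ω.drop k₁)).2 ≤ M * N := by
    have h1 := hle_mul (ω.drop k₁)
    have h2 : (ω.drop k₁).length = N := by rw [List.length_drop]; omega
    rw [h2] at h1
    exact h1
  have hval1a : (vL f (ω.take k₁)).1 + M * N ≥ P := by
    have h1 := congrArg Prod.fst hsplit1
    rw [hωv] at h1
    simp at h1
    omega
  have hval1b : (vL f (ω.take k₁)).2 ≤ N * M := by
    have h1 := congrArg Prod.snd hsplit1
    rw [hωv] at h1
    simp at h1
    omega
  -- value estimates for ω₂.take k₂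
  have hsplit2 := vL_take_drop f ω₂ k₂
  have hdrop2 : (vL f (ω₂.drop k₂)).1 + (vL f (ω₂.drop k₂)).2 ≤ M * N := by
    have h1 := hle_mul (ω₂.drop k₂)
    have h2 : (ω₂.drop k₂).length = N := by rw [List.length_drop]; omega
    rw [h2] at h1
    exact h1
  have hval2a : (vL f (ω₂.take k₂)).1 ≤ N * M := by
    have h1 := congrArg Prod.fst hsplit2
    rw [hω₂v] at h1
    simp at h1
    omega
  have hval2b : (vL f (ω₂.take k₂)).2 + M * N ≥ P := by
    have h1 := congrArg Prod.snd hsplit2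
    rw [hω₂v] at h1
    simp at h1
    omega
  -- compare the two prefixes of z
  rcases le_or_gt k₁ k₂ with hk | hk
  · obtain ⟨hmono, _⟩ := vL_take_mono f z hk
    rw [ht1, ht2] at hmono
    have hc : M * N = N * M := Nat.mul_comm _ _
    omega
  · obtain ⟨_, hmono⟩ := vL_take_mono f z (le_of_lt hk)
    rw [ht2, ht1] at hmono
    have hc : M * N = N * M := Nat.mul_comm _ _
    omega
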